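/- Let σ = ±1, let ν ∈ ℝ with ν ≠ 0, and let u, v : U → ℝ be smooth functions on an open set U ⊆ ℝ² satisfying u_{xt} = u·u_x·v_x, v_{xt} = −u(v_x² + 1) on U. Define F₁₁ = σ·u_x/ν, F₁₂ = 0, F₂₁ = u_x·v_x/ν, F₂₂ = ν, F₃₁ = 0, F₃₂ = σ·u. Then on U the structure equations with δ = 1 hold: −∂_t F₁₁ + ∂_x F₁₂ = F₃₁F₂₂ − F₃₂F₂₁, −∂_t F₂₁ + ∂_x F₂₂ = F₁₁F₃₂ − F₁₂F₃₁, −∂_t F₃₁ + ∂_x F₃₂ = F₁₁F₂₂ − F₁₂F₂₁; hence this system describes pseudospherical surfaces with these associated functions. -/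

import Mathlib

open Real

/-- Partial derivative in the `x` direction of a function on the `(x, t)` plane. -/
noncomputable def pdx (f : ℝ × ℝ → ℝ) (p : ℝ × ℝ) : ℝ := fderiv ℝ f p (1, 0)

/-- Partial derivative in the `t` direction of a function on the `(x, t)` plane. -/
noncomputable def pdt (f : ℝ × ℝ → ℝ) (p : ℝ × ℝ) : ℝ := fderiv ℝ f p (0, 1)

/-- The structure equations of a surface of constant Gaussian curvature `-δ`. -/
def StructEqs (δ : ℝ) (U : Set (ℝ × ℝ)) (F11 F12 F21 F22 F31 F32 : ℝ × ℝ → ℝ) : Prop :=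
  ∀ p ∈ U,
    -(pdt F11 p) + pdx F12 p = F31 p * F22 p - F32 p * F21 p ∧
    -(pdt F21 p) + pdx F22 p = F11 p * F32 p - F12 p * F31 p ∧
    -(pdt F31 p) + pdx F32 p = δ * (F11 p * F22 p - F12 p * F21 p)

/-
The proof is a direct computation: the `t`-derivatives of `F₁₁` and `F₂₁` are expressed
through `u_xt` and `v_xt` by the product rule, the system replaces these by `u u_x v_x` and
`-u (v_x² + 1)`, and the three identities then reduce to `σ² = 1` and `ν / ν = 1`.
-/

section PartialDerivatives

variable (f g : ℝ × ℝ → ℝ) (c : ℝ) (p : ℝ × ℝ)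

theorem pdx_const : pdx (fun _ => c) p = 0 := by
  simp [pdx]

theorem pdt_const : pdt (fun _ => c) p = 0 := by
  simp [pdt]

theorem pdx_const_mul : pdx (fun q => c * f q) p = c * pdx f p := by
  simp [pdx, show (fun q => c * f q) = c • f from rfl, fderiv_const_smul_field]

theorem pdt_const_mul : pdt (fun q => c * f q) p = c * pdt f p := by
  simp [pdt, show (fun q => c * f q) = c • f from rfl, fderiv_const_smul_field]

theorem pdt_div_const : pdt (fun q => f q / c) p = pdt f p / c := by
  simpa only [div_eq_inv_mul] using pdt_const_mul f c⁻¹ p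

variable {f g p}

theorem pdt_mul (hf : DifferentiableAt ℝ f p) (hg : DifferentiableAt ℝ g p) :
    pdt (fun q => f q * g q) p = pdt f p * g p + f p * pdt g p := by
  rw [pdt, fderiv_fun_mul hf hg]
  simp only [pdt, add_apply, smul_apply, smul_eq_mul]
  ring

theorem differentiableAt_pdx (hf : ContDiffAt ℝ 2 f p) : DifferentiableAt ℝ (pdx f) p :=
  ((hf.fderiv_right (m := 1) (by norm_num)).clm_apply contDiffAt_const).differentiableAt
    (by norm_num)

end PartialDerivatives

/-- The system `u_xt = u u_x v_x`, `v_xt = −u(v_x² + 1)` describes pseudospherical surfaces. -/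
theorem system_cincoparametrosKODISex1_describes_pss (σ ν : ℝ)
    (hσ : σ = 1 ∨ σ = -1) (hν : ν ≠ 0)
    (U : Set (ℝ × ℝ)) (hU : IsOpen U)
    (u v : ℝ × ℝ → ℝ)
    (hu : ContDiffOn ℝ (⊤ : ℕ∞) u U) (hv : ContDiffOn ℝ (⊤ : ℕ∞) v U)
    (heq1 : ∀ p ∈ U, pdt (pdx u) p = u p * pdx u p * pdx v p)
    (heq2 : ∀ p ∈ U, pdt (pdx v) p = -(u p) * (pdx v p ^ 2 + 1)) :
    StructEqs 1 U
      (fun q => σ * pdx u q / ν)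
      (fun _ => 0)
      (fun q => pdx u q * pdx v q / ν)
      (fun _ => ν)
      (fun _ => 0)
      (fun q => σ * u q) := by
  intro p hp
  have hu2 : ContDiffAt ℝ 2 u p := (hu.contDiffAt (hU.mem_nhds hp)).of_le (by norm_cast)
  have hv2 : ContDiffAt ℝ 2 v p := (hv.contDiffAt (hU.mem_nhds hp)).of_le (by norm_cast)
  have hσσ : σ * σ = 1 := by rcases hσ with rfl | rfl <;> norm_num
  refine ⟨?_, ?_, ?_⟩
  · rw [pdt_div_const, pdt_const_mul, pdx_const, heq1 p hp]
    ring
  · rw [pdt_div_const, pdt_mul (differentiableAt_pdx hu2) (differentiableAt_pdx hv2), pdx_const,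
      heq1 p hp, heq2 p hp]
    linear_combination (-(pdx u p * u p / ν)) * hσσ
  · rw [pdt_const, pdx_const_mul]
    field_simp
    ring
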